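/- arXiv:1702.04225 — 5 statements merged into one kernel-verified Lean document; each statement's English description precedes it below -/
import Mathlib

section
/- Let G be a group generated by a finite set S, equipped with the word metric d_S, and let H, K ≤ G be subgroups. Then for every r, s ≥ 0, the subset K ∩ H is at finite Hausdorff distance from N_r(K) ∩ N_s(H). -/
open Metric Set
open scoped NNReal Pointwise

/-- The closed `r`-neighbourhood `N_r(A)` of a subset `A` of a metric space. -/
def nbhd {X : Type*} [PseudoMetricSpace X] (r : ℝ≥0) (A : Set X) : Set X :=
  {x : X | ∃ a ∈ A, nndist x a ≤ r}

/-- The word length of `g` with respect to a generating set `S`: the least `n` such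
that `g` is a product of `n` elements of `S ∪ S⁻¹`. -/
noncomputable def wordLength {G : Type*} [Group G] (S : Set G) (g : G) : ℕ :=
  sInf {n : ℕ | ∃ l : List G, (∀ x ∈ l, x ∈ S ∨ x⁻¹ ∈ S) ∧ l.prod = g ∧ l.length = n}

/-- The metric on `G` is the word metric with respect to `S`. -/
def IsWordMetric {G : Type*} [Group G] [MetricSpace G] (S : Set G) : Prop :=
  ∀ g h : G, dist g h = wordLength S (g⁻¹ * h)

/-- A subset `A ⊆ G` is `H`-finite if `A ⊆ H·R` for some finite `R ⊆ G`. -/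
def HFinite {G : Type*} [Group G] (H : Subgroup G) (A : Set G) : Prop :=
  ∃ R : Set G, R.Finite ∧ A ⊆ (H : Set G) * R

/-- Two subsets are at finite Hausdorff distance if each is contained in some
neighbourhood of the other. -/
def AtFiniteHausdorffDist {X : Type*} [PseudoMetricSpace X] (A B : Set X) : Prop :=
  ∃ r : ℝ≥0, A ⊆ nbhd r B ∧ B ⊆ nbhd r A

/-- Every group element is the product of a list realizing its word length. -/
lemma exists_wordLength_list {G : Type*} [Group G] {S : Set G}
    (hSgen : Subgroup.closure S = ⊤) (g : G) :
    ∃ l : List G, (∀ x ∈ l, x ∈ S ∨ x⁻¹ ∈ S) ∧ l.prod = g ∧ l.length = wordLength S g := by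
  have hmem : g ∈ Submonoid.closure (S ∪ S⁻¹) := by
    rw [← Subgroup.closure_toSubmonoid, hSgen]; trivial
  obtain ⟨l, hl, hprod⟩ := Submonoid.exists_list_of_mem_closure hmem
  have hne : {n : ℕ | ∃ l : List G, (∀ x ∈ l, x ∈ S ∨ x⁻¹ ∈ S) ∧ l.prod = g ∧ l.length = n}.Nonempty := by
    refine ⟨l.length, l, fun x hx => ?_, hprod, rfl⟩
    rcases hl x hx with h | h
    · exact Or.inl h
    · exact Or.inr (Set.mem_inv.mp h)
  exact Nat.sInf_mem hne

/-- Balls in the word length are finite when `S` is finite and generates. -/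
lemma finite_wordLength_ball {G : Type*} [Group G] {S : Set G} (hSfin : S.Finite)
    (hSgen : Subgroup.closure S = ⊤) (n : ℕ) :
    {g : G | wordLength S g ≤ n}.Finite := by
  classical
  set T : Set G := S ∪ S⁻¹ with hT
  have hTfin : T.Finite := hSfin.union hSfin.inv
  have : Finite ↥T := hTfin
  have hLfin : {l : List ↥T | l.length ≤ n}.Finite := List.finite_length_le ↥T n
  have himg : {g : G | wordLength S g ≤ n} ⊆
      (fun l : List ↥T => (l.map Subtype.val).prod) '' {l : List ↥T | l.length ≤ n} := by
    intro g hg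
    obtain ⟨l, hlmem, hlprod, hllen⟩ := exists_wordLength_list hSgen g
    have hlT : ∀ x ∈ l, x ∈ T := by
      intro x hx
      rcases hlmem x hx with h | h
      · exact Or.inl h
      · exact Or.inr (Set.mem_inv.mpr h)
    refine ⟨l.attachWith (· ∈ T) hlT, ?_, ?_⟩
    · simpa [Set.mem_setOf_eq, hllen] using hg
    · simp [hlprod]
  exact (hLfin.image _).subset himg

/-- Let `G` be a group generated by a finite set `S`, equipped with the
word metric, and let `H, K ≤ G` be subgroups. For every `r, s ≥ 0`, the subset `K ∩ H`
is at finite Hausdorff distance from `N_r(K) ∩ N_s(H)`. -/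
theorem inter_hausdorffDist_nbhd_inter {G : Type*} [Group G] [MetricSpace G]
    (S : Set G) (hSfin : S.Finite) (hSgen : Subgroup.closure S = ⊤)
    (hword : IsWordMetric S) (H K : Subgroup G) (r s : ℝ≥0) :
    AtFiniteHausdorffDist ((K : Set G) ∩ (H : Set G))
      (nbhd r (K : Set G) ∩ nbhd s (H : Set G)) := by
  classical
  -- the sets of possible "offsets"
  set Br : Set G := {g : G | wordLength S g ≤ ⌊(r : ℝ)⌋₊} with hBr
  set Bs : Set G := {g : G | wordLength S g ≤ ⌊(s : ℝ)⌋₊} with hBs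
  have hBrfin : Br.Finite := finite_wordLength_ball hSfin hSgen _
  have hBsfin : Bs.Finite := finite_wordLength_ball hSfin hSgen _
  -- for each pair of offsets, the corresponding "double coset slice"
  let C : G → G → Set G := fun a b => {x : G | x * a ∈ K ∧ x * b ∈ H}
  let f : G × G → G := fun p => if h : (C p.1 p.2).Nonempty then h.choose else 1
  have hPfin : (Br ×ˢ Bs).Finite := hBrfin.prod hBsfin
  set F : Finset (G × G) := hPfin.toFinset with hF
  set ρ : ℝ≥0 := F.sup (fun p => nndist 1 (f p)⁻¹) with hρ
  refine ⟨ρ, ?_, ?_⟩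
  · -- K ∩ H ⊆ nbhd ρ (nbhd r K ∩ nbhd s H): each point is in the bigger set
    intro x hx
    refine ⟨x, ⟨⟨x, hx.1, by simp⟩, ⟨x, hx.2, by simp⟩⟩, by simp⟩
  · intro x hx
    obtain ⟨⟨k, hkK, hkx⟩, ⟨h, hhH, hhx⟩⟩ := hx
    set a : G := x⁻¹ * k with ha
    set b : G := x⁻¹ * h with hb
    have hxa : x * a ∈ K := by simpa [ha, mul_assoc] using hkK
    have hxb : x * b ∈ H := by simpa [hb, mul_assoc] using hhH
    have haBr : a ∈ Br := by
      have hd : dist x k = wordLength S a := hword x k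
      have : (wordLength S a : ℝ) ≤ (r : ℝ) := by
        rw [← hd, ← coe_nndist]; exact_mod_cast hkx
      exact Nat.le_floor this
    have hbBs : b ∈ Bs := by
      have hd : dist x h = wordLength S b := hword x h
      have : (wordLength S b : ℝ) ≤ (s : ℝ) := by
        rw [← hd, ← coe_nndist]; exact_mod_cast hhx
      exact Nat.le_floor this
    have hne : (C a b).Nonempty := ⟨x, hxa, hxb⟩
    have hg0 : f (a, b) ∈ C a b := by
      simp only [f, dif_pos hne]
      exact hne.choose_spec
    set g0 : G := f (a, b) with hg0def
    -- x * g0⁻¹ ∈ K ∩ H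
    have hcK : x * g0⁻¹ ∈ K := by
      have := mul_mem hxa (inv_mem hg0.1)
      simpa [mul_assoc] using this
    have hcH : x * g0⁻¹ ∈ H := by
      have := mul_mem hxb (inv_mem hg0.2)
      simpa [mul_assoc] using this
    refine ⟨x * g0⁻¹, ⟨hcK, hcH⟩, ?_⟩
    have hdist : dist x (x * g0⁻¹) = dist 1 g0⁻¹ := by
      rw [hword x (x * g0⁻¹), hword 1 g0⁻¹]
      simp
    have hnn : nndist x (x * g0⁻¹) = nndist 1 g0⁻¹ := by
      ext
      simpa [coe_nndist] using hdist
    rw [hnn]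
    exact Finset.le_sup (f := fun p => nndist 1 (f p)⁻¹)
      (by simp [hF, Set.Finite.mem_toFinset, haBr, hbBs] : (a, b) ∈ F)
end

section
/- Let G be a group generated by a finite set S, equipped with the word metric d_S, and let H, K ≤ G be subgroups. Then: (1) H ⊆ N_r(K) for some r ≥ 0 if and only if H is commensurable to a subgroup of K (equivalently, H ∩ K has finite index in H); (2) the Hausdorff distance between H and K is finite if and only if H and K are commensurable (i.e., H ∩ K has finite index in both H and K). -/
/-!
A point `h` lies within `r` of `K` exactly when the coset `h⁻¹K` meets the word ball of radius
`r`. Balls are finite because `S` is, so `H` lies in a neighbourhood of `K` iff `H` has finitely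
many images in `G ⧸ K`. These images form the orbit of the coset `K` under `H`, whose stabilizer
is `H ∩ K`; by orbit–stabilizer that is iff `H ∩ K` has finite index in `H`. Part (2) is part (1)
applied in both directions.
-/

open Metric Set
open scoped NNReal Pointwise

section

open MulAction

variable {G : Type*} [Group G]

theorem Subgroup.relIndex_ne_zero_iff_finite_image_mk (H K : Subgroup G) :
    K.relIndex H ≠ 0 ↔ ((QuotientGroup.mk : G → G ⧸ K) '' H).Finite := by
  have smul_one_coset (h : H) : h • (QuotientGroup.mk 1 : G ⧸ K) = (h : G) := by
    change (h : G) • (QuotientGroup.mk 1 : G ⧸ K) = _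
    rw [MulAction.Quotient.smul_mk, smul_eq_mul, mul_one]
  have hstab : stabilizer H (QuotientGroup.mk 1 : G ⧸ K) = K.subgroupOf H := by
    ext h
    rw [mem_stabilizer_iff, smul_one_coset, Subgroup.mem_subgroupOf, QuotientGroup.eq, mul_one,
      inv_mem_iff]
  have horbit : orbit H (QuotientGroup.mk 1 : G ⧸ K) = (QuotientGroup.mk : G → G ⧸ K) '' H := by
    ext x
    simp [mem_orbit_iff, smul_one_coset]
  rw [Subgroup.relIndex, ← hstab, index_stabilizer, horbit]
  exact ⟨finite_of_ncard_ne_zero, fun hfin => ncard_ne_zero_of_mem ⟨1, H.one_mem, rfl⟩ hfin⟩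

theorem exists_list_length_eq_wordLength {S : Set G} (hSgen : Subgroup.closure S = ⊤) (g : G) :
    ∃ l : List G, (∀ x ∈ l, x ∈ S ∨ x⁻¹ ∈ S) ∧ l.prod = g ∧ l.length = wordLength S g := by
  have hg : g ∈ Submonoid.closure (S ∪ S⁻¹) := by
    rw [← Subgroup.closure_toSubmonoid, hSgen]
    exact Subgroup.mem_top g
  obtain ⟨l, hl, rfl⟩ := Submonoid.exists_list_of_mem_closure hg
  exact Nat.sInf_mem (s := {n | ∃ l' : List G, (∀ x ∈ l', x ∈ S ∨ x⁻¹ ∈ S) ∧ l'.prod = l.prod ∧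
    l'.length = n}) ⟨l.length, l, hl, rfl, rfl⟩

theorem finite_setOf_wordLength_le {S : Set G} (hSfin : S.Finite)
    (hSgen : Subgroup.closure S = ⊤) (n : ℕ) : {g : G | wordLength S g ≤ n}.Finite := by
  have : Finite ↥(S ∪ S⁻¹) := (hSfin.union hSfin.inv).to_subtype
  refine ((List.finite_length_le (↥(S ∪ S⁻¹)) n).image
    fun l => (l.map Subtype.val).prod).subset ?_
  intro g hg
  obtain ⟨l, hlS, rfl, hlen⟩ := exists_list_length_eq_wordLength hSgen g
  lift l to List ↥(S ∪ S⁻¹) using hlS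
  refine ⟨l, ?_, rfl⟩
  show l.length ≤ n
  rw [← List.length_map Subtype.val, hlen]
  exact hg

theorem nbhd_mono {X : Type*} [PseudoMetricSpace X] {r r' : ℝ≥0} (h : r ≤ r') (A : Set X) :
    nbhd r A ⊆ nbhd r' A :=
  fun _ ⟨a, ha, hd⟩ => ⟨a, ha, hd.trans h⟩

namespace IsWordMetric

variable [MetricSpace G] {S : Set G}

theorem nndist_eq (hword : IsWordMetric S) (g h : G) :
    nndist g h = wordLength S (g⁻¹ * h) :=
  NNReal.eq <| by rw [coe_nndist, hword g h, NNReal.coe_natCast]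

theorem finite_image_mk_of_subset_nbhd (hSfin : S.Finite) (hSgen : Subgroup.closure S = ⊤)
    (hword : IsWordMetric S) {H K : Subgroup G} {r : ℝ≥0}
    (hHK : (H : Set G) ⊆ nbhd r (K : Set G)) :
    ((QuotientGroup.mk : G → G ⧸ K) '' H).Finite := by
  refine ((finite_setOf_wordLength_le hSfin hSgen ⌈r⌉₊).image
    (QuotientGroup.mk : G → G ⧸ K)).subset ?_
  rintro _ ⟨h, hh, rfl⟩
  obtain ⟨k, hk, hdist⟩ := hHK (H.inv_mem hh)
  rw [hword.nndist_eq, inv_inv] at hdist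
  refine ⟨h * k, ?_, QuotientGroup.mk_mul_of_mem h hk⟩
  exact Nat.cast_le.mp (hdist.trans (Nat.le_ceil r))

theorem exists_subset_nbhd_of_finite_image_mk (hword : IsWordMetric S) {H K : Subgroup G}
    (hfin : ((QuotientGroup.mk : G → G ⧸ K) '' H).Finite) :
    ∃ r : ℝ≥0, (H : Set G) ⊆ nbhd r (K : Set G) := by
  refine ⟨hfin.toFinset.sup fun q => wordLength S q.out, fun h hh => ?_⟩
  set q : G ⧸ K := QuotientGroup.mk h⁻¹
  have hq : q ∈ hfin.toFinset := hfin.mem_toFinset.mpr ⟨h⁻¹, H.inv_mem hh, rfl⟩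
  have hhq : h * q.out ∈ K := by simpa using QuotientGroup.eq.mp q.out_eq'.symm
  refine ⟨h * q.out, hhq, ?_⟩
  rw [hword.nndist_eq, inv_mul_cancel_left]
  exact_mod_cast Finset.le_sup (f := fun q : G ⧸ K => wordLength S q.out) hq

theorem exists_subset_nbhd_iff_relIndex_ne_zero (hSfin : S.Finite)
    (hSgen : Subgroup.closure S = ⊤) (hword : IsWordMetric S) (H K : Subgroup G) :
    (∃ r : ℝ≥0, (H : Set G) ⊆ nbhd r (K : Set G)) ↔ K.relIndex H ≠ 0 := by
  rw [Subgroup.relIndex_ne_zero_iff_finite_image_mk]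
  exact ⟨fun ⟨_, hr⟩ => finite_image_mk_of_subset_nbhd hSfin hSgen hword hr,
    exists_subset_nbhd_of_finite_image_mk hword⟩

end IsWordMetric

end

/-- Let `G` be a group generated by a finite set `S`, equipped with the
word metric, and let `H, K ≤ G` be subgroups. Then:
1. `H ⊆ N_r(K)` for some `r ≥ 0` iff `H` is commensurable to a subgroup of `K`
   (equivalently, `H ∩ K` has finite index in `H`);
2. the Hausdorff distance between `H` and `K` is finite iff `H` and `K` are
   commensurable (i.e. `H ∩ K` has finite index in both `H` and `K`). -/
theorem subgroup_nbhd_iff_commensurable {G : Type*} [Group G] [MetricSpace G]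
    (S : Set G) (hSfin : S.Finite) (hSgen : Subgroup.closure S = ⊤)
    (hword : IsWordMetric S) (H K : Subgroup G) :
    ((∃ r : ℝ≥0, (H : Set G) ⊆ nbhd r (K : Set G)) ↔ K.relIndex H ≠ 0) ∧
    (AtFiniteHausdorffDist (H : Set G) (K : Set G) ↔
      (K.relIndex H ≠ 0 ∧ H.relIndex K ≠ 0)) := by
  have key := hword.exists_subset_nbhd_iff_relIndex_ne_zero hSfin hSgen
  refine ⟨key H K, ⟨fun ⟨r, hHK, hKH⟩ => ⟨(key H K).mp ⟨r, hHK⟩, (key K H).mp ⟨r, hKH⟩⟩, ?_⟩⟩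
  rintro ⟨hHK, hKH⟩
  obtain ⟨r₁, hr₁⟩ := (key H K).mpr hHK
  obtain ⟨r₂, hr₂⟩ := (key K H).mpr hKH
  exact ⟨max r₁ r₂, hr₁.trans (nbhd_mono (le_max_left _ _) _),
    hr₂.trans (nbhd_mono (le_max_right _ _) _)⟩
end

section
/- Let X be a 1-geodesic metric space, W ⊆ X, r ≥ 1 and A ≥ 0. Then a subset C ⊆ X is an (r,A)-coarse complementary component of W if and only if C \ N_A(W) is a union of vertex sets of connected components of the graph whose vertex set is X \ N_A(W) and in which distinct vertices x, y are adjacent iff d(x,y) ≤ r. -/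
/-!
A point of `∂_r (C \ N_A(W))` lying outside `N_A(W)` is precisely a vertex of the graph that is
not in `C` but adjacent to a vertex in `C`. So being a coarse complementary component means that
`C` is closed under adjacency in the graph, which is the same as being closed under reachability.
-/

open Metric Set
open scoped NNReal

/-- The coarse `r`-boundary `∂_r C := {x ∈ X \ C : d(x,C) ≤ r}`. -/
def coarseBoundary {X : Type*} [PseudoMetricSpace X] (r : ℝ≥0) (C : Set X) : Set X :=
  {x : X | x ∉ C ∧ ∃ c ∈ C, nndist x c ≤ r}

/-- `C` is an `(r,A)`-coarse complementary component of `W`: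
`∂_r (C \ N_A(W)) ⊆ N_A(W)`. -/
def IsCCC {X : Type*} [PseudoMetricSpace X] (r A : ℝ≥0) (W C : Set X) : Prop :=
  coarseBoundary r (C \ nbhd A W) ⊆ nbhd A W

/-- `C` is a coarse complementary component of `W`, i.e. an `(r,A)`-coarse complementary
component for some `r ≥ 1`, `A ≥ 0`. -/
def IsCoarseCompComplement {X : Type*} [PseudoMetricSpace X] (W C : Set X) : Prop :=
  ∃ r A : ℝ≥0, 1 ≤ r ∧ IsCCC r A W C

/-- A coarse complementary component is shallow if contained in some neighbourhood of `W`. -/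
def IsShallow {X : Type*} [PseudoMetricSpace X] (W C : Set X) : Prop :=
  ∃ R : ℝ≥0, C ⊆ nbhd R W

/-- A metric space is 1-geodesic if any two points are joined by a discrete geodesic. -/
def OneGeodesic (X : Type*) [PseudoMetricSpace X] : Prop :=
  ∀ x y : X, ∃ (n : ℕ) (c : ℕ → X), c 0 = x ∧ c n = y ∧
    ∀ i ≤ n, ∀ j ≤ n, dist (c i) (c j) = |(i : ℝ) - (j : ℝ)|

/-- `W` coarsely `n`-separates `X`: there are `n` deep, pairwise coarse disjoint,
coarse complementary components of `W`. -/
def CoarselySeparates {X : Type*} [PseudoMetricSpace X] (n : ℕ) (W : Set X) : Prop :=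
  ∃ C : Fin n → Set X,
    (∀ i, IsCoarseCompComplement W (C i)) ∧
    (∀ i, ¬ IsShallow W (C i)) ∧
    ∀ i j : Fin n, i ≠ j → IsShallow W (C i ∩ C j)

/-- The graph whose vertex set is `X \ N_A(W)` and in which distinct vertices `x, y`
are adjacent iff `d(x,y) ≤ r`. -/
def complementGraph {X : Type*} [PseudoMetricSpace X] (r A : ℝ≥0) (W : Set X) :
    SimpleGraph {x : X // x ∉ nbhd A W} where
  Adj u v := u ≠ v ∧ nndist (u : X) (v : X) ≤ r
  symm := by
    constructor
    intro u v h
    exact ⟨h.1.symm, by rw [nndist_comm]; exact h.2⟩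
  loopless := by
    constructor
    intro u h
    exact h.1 rfl

theorem SimpleGraph.Reachable.mem_iff_of_forall_adj {V : Type*} {G : SimpleGraph V} {s : Set V}
    (hs : ∀ ⦃u v⦄, G.Adj u v → u ∈ s → v ∈ s) {u v : V} (h : G.Reachable u v) :
    u ∈ s ↔ v ∈ s := by
  obtain ⟨p⟩ := h
  induction p with
  | nil => rfl
  | cons hadj _ ih => exact ⟨fun hu => ih.1 (hs hadj hu), fun hv => hs hadj.symm (ih.2 hv)⟩

theorem isCCC_iff_forall_adj {X : Type*} [PseudoMetricSpace X] (r A : ℝ≥0) (W C : Set X) :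
    IsCCC r A W C ↔ ∀ ⦃u v : {x : X // x ∉ nbhd A W}⦄,
      (complementGraph r A W).Adj u v → (u : X) ∈ C → (v : X) ∈ C := by
  constructor
  · intro hC u v huv hu
    by_contra hv
    exact v.2 (hC ⟨fun h => hv h.1, u, ⟨hu, u.2⟩, by rw [nndist_comm]; exact huv.2⟩)
  · rintro h x ⟨hxC, c, ⟨hcC, hcW⟩, hxc⟩
    by_contra hxW
    have hne : c ≠ x := fun hcx => hxC (hcx ▸ ⟨hcC, hcW⟩)
    have hadj : (complementGraph r A W).Adj ⟨c, hcW⟩ ⟨x, hxW⟩ :=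
      ⟨ne_of_apply_ne Subtype.val hne, by rwa [nndist_comm]⟩
    exact hxC ⟨h hadj hcC, hxW⟩

theorem isCCC_iff_union_of_components_general {X : Type*} [MetricSpace X]
    (W : Set X) (r A : ℝ≥0) (C : Set X) :
    IsCCC r A W C ↔
      ∀ u v : {x : X // x ∉ nbhd A W}, (complementGraph r A W).Reachable u v →
        ((u : X) ∈ C ↔ (v : X) ∈ C) := by
  rw [isCCC_iff_forall_adj]
  exact ⟨fun h _ _ huv => huv.mem_iff_of_forall_adj (s := Subtype.val ⁻¹' C) h,
    fun h u v huv => (h u v huv.reachable).1⟩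

/-- `C ⊆ X` is an `(r,A)`-coarse complementary component of `W` iff
`C \ N_A(W)` is a union of vertex sets of connected components of the graph on
`X \ N_A(W)` where distinct points are adjacent iff they are at distance at most `r`,
i.e. membership of `C` among such vertices is invariant under reachability. -/
theorem isCCC_iff_union_of_components {X : Type*} [MetricSpace X] (hX : OneGeodesic X)
    (W : Set X) (r A : ℝ≥0) (hr : 1 ≤ r) (C : Set X) :
    IsCCC r A W C ↔
      ∀ u v : {x : X // x ∉ nbhd A W}, (complementGraph r A W).Reachable u v →
        ((u : X) ∈ C ↔ (v : X) ∈ C) :=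
  isCCC_iff_union_of_components_general W r A C
end

section
/- Let X be a 1-geodesic metric space, W ⊆ X, r ≥ 1 and A ≥ 0. If C and D are (r,A)-coarse complementary components of W, then so are the complement X \ C, the union C ∪ D, the intersection C ∩ D, and the symmetric difference of C and D. -/
open Metric Set
open scoped NNReal

/-- In a 1-geodesic metric space, the complement, union, intersection and
symmetric difference of `(r,A)`-coarse complementary components of `W` are again
`(r,A)`-coarse complementary components of `W`. -/
theorem isCCC_compl_union_inter_symmDiff {X : Type*} [MetricSpace X] (hX : OneGeodesic X)
    (W : Set X) (r A : ℝ≥0) (hr : 1 ≤ r) (C D : Set X)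
    (hC : IsCCC r A W C) (hD : IsCCC r A W D) :
    IsCCC r A W Cᶜ ∧ IsCCC r A W (C ∪ D) ∧ IsCCC r A W (C ∩ D) ∧
      IsCCC r A W (symmDiff C D) := by
  refine ⟨?_, ?_, ?_, ?_⟩
  · -- complement
    rintro x ⟨hx, c, ⟨hcC, hcN⟩, hdc⟩
    by_contra hxN
    have hxC : x ∈ C := by
      by_contra h
      exact hx ⟨h, hxN⟩
    exact hcN (hC ⟨fun h => hcC h.1, x, ⟨hxC, hxN⟩, by rwa [nndist_comm]⟩)
  · -- union
    rintro x ⟨hx, c, ⟨hcCD, hcN⟩, hdc⟩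
    by_contra hxN
    have hxCD : x ∉ C ∪ D := fun h => hx ⟨h, hxN⟩
    rcases hcCD with hcC | hcD
    · exact hxN (hC ⟨fun h => hxCD (Or.inl h.1), c, ⟨hcC, hcN⟩, hdc⟩)
    · exact hxN (hD ⟨fun h => hxCD (Or.inr h.1), c, ⟨hcD, hcN⟩, hdc⟩)
  · -- intersection
    rintro x ⟨hx, c, ⟨hcCD, hcN⟩, hdc⟩
    by_contra hxN
    have hxCD : x ∉ C ∩ D := fun h => hx ⟨h, hxN⟩
    rcases (not_and_or.mp hxCD) with hxC | hxD
    · exact hxN (hC ⟨fun h => hxC h.1, c, ⟨hcCD.1, hcN⟩, hdc⟩)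
    · exact hxN (hD ⟨fun h => hxD h.1, c, ⟨hcCD.2, hcN⟩, hdc⟩)
  · -- symmetric difference
    rintro x ⟨hx, c, ⟨hcS, hcN⟩, hdc⟩
    by_contra hxN
    have hxS : x ∉ symmDiff C D := fun h => hx ⟨h, hxN⟩
    rcases Set.mem_symmDiff.mp hcS with ⟨hcC, hcD⟩ | ⟨hcD, hcC⟩
    · by_cases hxC : x ∈ C
      · have hxD : x ∈ D := by
          by_contra hxD
          exact hxS (Set.mem_symmDiff.mpr (Or.inl ⟨hxC, hxD⟩))
        exact hcN (hD ⟨fun h => hcD h.1, x, ⟨hxD, hxN⟩, by rwa [nndist_comm]⟩)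
      · exact hxN (hC ⟨fun h => hxC h.1, c, ⟨hcC, hcN⟩, hdc⟩)
    · by_cases hxD : x ∈ D
      · have hxC : x ∈ C := by
          by_contra hxC
          exact hxS (Set.mem_symmDiff.mpr (Or.inr ⟨hxD, hxC⟩))
        exact hcN (hC ⟨fun h => hcC h.1, x, ⟨hxC, hxN⟩, by rwa [nndist_comm]⟩)
      · exact hxN (hD ⟨fun h => hxD h.1, c, ⟨hcD, hcN⟩, hdc⟩)
end

section
/- Let X be a 1-geodesic metric space and suppose C is an (r,A)-coarse complementary component of W ⊆ X for some r ≥ 1 and A ≥ 0. Then for all R ≥ 0, N_R(C) ⊆ C ∪ N_{A+R}(W). -/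
open Metric Set
open scoped NNReal

/-- If `X` is a 1-geodesic metric space and `C` is an `(r,A)`-coarse
complementary component of `W ⊆ X` for some `r ≥ 1` and `A ≥ 0`, then for all `R ≥ 0`,
`N_R(C) ⊆ C ∪ N_{A+R}(W)`. -/
theorem nbhd_coarseComp_subset {X : Type*} [MetricSpace X] (hX : OneGeodesic X)
    (W C : Set X) (r A : ℝ≥0) (hr : 1 ≤ r) (hC : IsCCC r A W C) (R : ℝ≥0) :
    nbhd R C ⊆ C ∪ nbhd (A + R) W := by
  rintro x ⟨c, hcC, hxc⟩
  have hxcR : dist x c ≤ (R : ℝ) := by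
    rw [← coe_nndist]; exact_mod_cast hxc
  by_cases hcW : c ∈ nbhd A W
  · obtain ⟨w, hwW, hcw⟩ := hcW
    refine Or.inr ⟨w, hwW, ?_⟩
    calc nndist x w ≤ nndist x c + nndist c w := nndist_triangle _ _ _
      _ ≤ R + A := add_le_add hxc hcw
      _ = A + R := add_comm _ _
  · obtain ⟨n, γ, h0, hn, hd⟩ := hX c x
    have hnR : (n : ℝ) ≤ (R : ℝ) := by
      have h := hd 0 (Nat.zero_le n) n le_rfl
      rw [h0, hn] at h
      have : dist c x = n := by rw [h]; simp [abs_of_nonpos]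
      rw [dist_comm] at this
      linarith [hxcR]
    set P : ℕ → Prop := fun i => γ i ∈ C \ nbhd A W with hP
    have hP0 : P 0 := by rw [hP]; simp only [h0]; exact ⟨hcC, hcW⟩
    classical
    set i := Nat.findGreatest P n with hi
    have hspec : P i := Nat.findGreatest_spec (Nat.zero_le n) hP0
    have hile : i ≤ n := Nat.findGreatest_le n
    rcases eq_or_lt_of_le hile with heq | hlt
    · left
      have : γ i = x := by rw [heq, hn]
      rw [← this]; exact hspec.1
    · have hnot : ¬ P (i + 1) :=
        Nat.findGreatest_is_greatest (Nat.lt_succ_self i) hlt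
      have hd1 : dist (γ (i + 1)) (γ i) = 1 := by
        rw [hd (i+1) hlt (i) (le_of_lt hlt)]
        push_cast; simp
      have hbd : γ (i + 1) ∈ coarseBoundary r (C \ nbhd A W) := by
        refine ⟨hnot, γ i, hspec, ?_⟩
        rw [← NNReal.coe_le_coe, coe_nndist, hd1]
        exact_mod_cast hr
      obtain ⟨w, hwW, hw⟩ := hC hbd
      refine Or.inr ⟨w, hwW, ?_⟩
      rw [← NNReal.coe_le_coe, coe_nndist]
      have hi1 : (i : ℝ) + 1 ≤ (n : ℝ) := by exact_mod_cast hlt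
      have hdx : dist x (γ (i + 1)) ≤ (R : ℝ) := by
        rw [← hn, hd n le_rfl (i+1) hlt, abs_of_nonneg (by push_cast; linarith)]
        push_cast
        linarith
      have hwd : dist (γ (i + 1)) w ≤ (A : ℝ) := by
        rw [← coe_nndist]; exact_mod_cast hw
      calc dist x w ≤ dist x (γ (i + 1)) + dist (γ (i + 1)) w := dist_triangle _ _ _
        _ ≤ R + A := add_le_add hdx hwd
        _ = ((A + R : ℝ≥0) : ℝ) := by push_cast; ring
end
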